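/- Let C be an abelian category and D(C) its derived category. Let S : D(C) → D(C) be a triangulated autoequivalence, i.e., an equivalence of categories whose underlying functor commutes with the shift functor and preserves distinguished triangles. Let X₁ and X₂ be objects of D(C) that are isomorphic to bounded complexes (complexes Y of objects of C with Y^n = 0 for all n outside some finite interval). Suppose there are natural numbers m₁, m₂ and integers n₁, n₂ such that S^{m₁}(X₁) ≅ X₁[n₁], S^{m₂}(X₂) ≅ X₂[n₂], and m₁·n₂ − m₂·n₁ ≠ 0. Then Hom_{D(C)}(X₁, X₂) = 0 and Hom_{D(C)}(X₂, X₁) = 0. -/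

import Mathlib

open CategoryTheory Limits

noncomputable instance stmt12HasDerivedCategory (C : Type u) [Category.{v} C] [Abelian C] :
    HasDerivedCategory C :=
  HasDerivedCategory.standard C

/-- Iterated composition of an endofunctor. -/
def functorIter {C : Type u} [Category.{v} C] (F : C ⥤ C) : ℕ → (C ⥤ C)
  | 0 => 𝟭 C
  | n + 1 => functorIter F n ⋙ F

/-!
If `S^{m₁} X₁ ≅ X₁[n₁]` and `S^{m₂} X₂ ≅ X₂[n₂]`, then `G = S^{m₁ m₂ k}` acts on `X₁` as the
shift by `k m₂ n₁` and on `X₂` as the shift by `k m₁ n₂`. As `G` is fully faithful and commutes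
with shifts, `Hom(X₁, X₂[s]) ≃ Hom(X₁, X₂[s + k d])` with `d = m₁ n₂ - m₂ n₁ ≠ 0`, so
`Hom(X₁, X₂)` is isomorphic to `Hom(X₁, X₂[s])` for shifts `s` as negative as we like. For a
bounded above `X₁` and a bounded below `X₂` (with respect to the canonical t-structure) such
`Hom` groups vanish.
-/

section FunctorIter

variable {D : Type*} [Category D]

lemma functorIter_add (F : D ⥤ D) (a b : ℕ) :
    functorIter F (a + b) = functorIter F a ⋙ functorIter F b := by
  induction b with
  | zero => exact (Functor.comp_id _).symm
  | succ b ih =>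
    change functorIter F (a + b) ⋙ F = _
    rw [ih, Functor.assoc]
    rfl

lemma functorIter_mul (F : D ⥤ D) (m k : ℕ) :
    functorIter F (m * k) = functorIter (functorIter F m) k := by
  induction k with
  | zero => rfl
  | succ k ih =>
    change functorIter F (m * k + m) = _
    rw [functorIter_add, ih]
    rfl

instance functorIter_isEquivalence (F : D ⥤ D) [F.IsEquivalence] :
    ∀ n, (functorIter F n).IsEquivalence
  | 0 => inferInstanceAs (𝟭 D).IsEquivalence
  | n + 1 =>
    have := functorIter_isEquivalence F n
    inferInstanceAs (functorIter F n ⋙ F).IsEquivalence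

variable [HasShift D ℤ]

noncomputable instance functorIterCommShift (F : D ⥤ D) [F.CommShift ℤ] :
    ∀ n, (functorIter F n).CommShift ℤ
  | 0 => inferInstanceAs ((𝟭 D).CommShift ℤ)
  | n + 1 =>
    have := functorIterCommShift F n
    inferInstanceAs ((functorIter F n ⋙ F).CommShift ℤ)

lemma nonempty_functorIter_obj_iso_shift (F : D ⥤ D) [F.CommShift ℤ] {X : D} {n : ℤ}
    (e : F.obj X ≅ X⟦n⟧) (k : ℕ) : Nonempty ((functorIter F k).obj X ≅ X⟦(k : ℤ) * n⟧) := by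
  induction k with
  | zero => exact ⟨(shiftFunctorZero' D ((0 : ℕ) * n) (by simp)).symm.app X⟩
  | succ k ih =>
    obtain ⟨g⟩ := ih
    exact ⟨F.mapIso g ≪≫ (F.commShiftIso ((k : ℤ) * n)).app X ≪≫
      (shiftFunctor D ((k : ℤ) * n)).mapIso e ≪≫
      (shiftFunctorAdd' D n ((k : ℤ) * n) ((k + 1 : ℕ) * n) (by push_cast; ring)).symm.app X⟩

lemma nonempty_functorIter_mul_obj_iso_shift (F : D ⥤ D) [F.CommShift ℤ] {X : D} {m : ℕ}
    {n : ℤ} (h : Nonempty ((functorIter F m).obj X ≅ X⟦n⟧)) (k : ℕ) :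
    Nonempty ((functorIter F (m * k)).obj X ≅ X⟦(k : ℤ) * n⟧) := by
  obtain ⟨e⟩ := h
  rw [functorIter_mul]
  exact nonempty_functorIter_obj_iso_shift _ e k

end FunctorIter

section HomShift

variable {D : Type*} [Category D] [HasShift D ℤ]

/-- A fully faithful `G` acting on `X` and `Y` as the shifts by `u` and `v` identifies
`Hom(X, Y[t])` with `Hom(X[u], Y[v + t])`, i.e. with `Hom(X, Y[t + v - u])`. -/
noncomputable def homShiftEquivOfObjIsoShift (G : D ⥤ D) [G.Full] [G.Faithful]
    [G.CommShift ℤ] {X Y : D} {u v : ℤ} (eX : G.obj X ≅ X⟦u⟧) (eY : G.obj Y ≅ Y⟦v⟧)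
    {t t' : ℤ} (h : t + v = t' + u) : (X ⟶ Y⟦t⟧) ≃ (X ⟶ Y⟦t'⟧) :=
  (Functor.FullyFaithful.ofFullyFaithful G).homEquiv.trans <|
    (Iso.homCongr eX ((G.commShiftIso t).app Y ≪≫ (shiftFunctor D t).mapIso eY ≪≫
      (shiftFunctorAdd' D v t (v + t) rfl).symm.app Y)).trans <|
    ((shiftEquiv D u).toAdjunction.homEquiv X (Y⟦v + t⟧)).trans <|
    Iso.homCongr (Iso.refl X)
      ((shiftFunctorAdd' D (v + t) (-u) t' (by omega)).symm.app Y)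

lemma nonempty_hom_shift_equiv_of_functorIter_obj_iso_shift (S : D ⥤ D) [S.IsEquivalence]
    [S.CommShift ℤ] {X₁ X₂ : D} {m₁ m₂ : ℕ} {n₁ n₂ : ℤ}
    (h₁ : Nonempty ((functorIter S m₁).obj X₁ ≅ X₁⟦n₁⟧))
    (h₂ : Nonempty ((functorIter S m₂).obj X₂ ≅ X₂⟦n₂⟧))
    (k : ℕ) {s s' : ℤ} (h : s + k * ((m₁ : ℤ) * n₂ - (m₂ : ℤ) * n₁) = s') :
    Nonempty ((X₁ ⟶ X₂⟦s⟧) ≃ (X₁ ⟶ X₂⟦s'⟧)) := by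
  obtain ⟨e₁⟩ := nonempty_functorIter_mul_obj_iso_shift S h₁ (m₂ * k)
  obtain ⟨e₂⟩ := nonempty_functorIter_mul_obj_iso_shift S h₂ (m₁ * k)
  rw [Nat.mul_left_comm] at e₂
  exact ⟨homShiftEquivOfObjIsoShift _ e₁ e₂ (by push_cast; linarith)⟩

end HomShift

namespace CategoryTheory.Triangulated.TStructure

variable {D : Type*} [Category D] [Preadditive D] [HasZeroObject D] [HasShift D ℤ]
  [∀ n : ℤ, (shiftFunctor D n).Additive] [Pretriangulated D] (t : TStructure D)

lemma subsingleton_hom_shift (X Y : D) {a b s : ℤ} [t.IsLE X b] [t.IsGE Y a] (h : s + b < a) :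
    Subsingleton (X ⟶ Y⟦s⟧) := by
  have := t.isGE_shift Y a s (a - s)
  exact ⟨fun f g => by rw [t.zero f b (a - s), t.zero g b (a - s)]⟩

theorem hom_eq_zero_of_functorIter_obj_iso_shift (S : D ⥤ D) [S.IsEquivalence]
    [S.CommShift ℤ] {X₁ X₂ : D} (hX₁ : t.minus X₁) (hX₂ : t.plus X₂) {m₁ m₂ : ℕ} {n₁ n₂ : ℤ}
    (h₁ : Nonempty ((functorIter S m₁).obj X₁ ≅ X₁⟦n₁⟧))
    (h₂ : Nonempty ((functorIter S m₂).obj X₂ ≅ X₂⟦n₂⟧))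
    (hd : (m₁ : ℤ) * n₂ - (m₂ : ℤ) * n₁ ≠ 0) (f : X₁ ⟶ X₂) : f = 0 := by
  obtain ⟨b, _⟩ := hX₁
  obtain ⟨a, _⟩ := hX₂
  set d := (m₁ : ℤ) * n₂ - (m₂ : ℤ) * n₁
  obtain ⟨N, hN⟩ : ∃ N : ℕ, b - a < N := ⟨(b - a + 1).toNat, by omega⟩
  have : Subsingleton (X₁ ⟶ X₂⟦(0 : ℤ)⟧) := by
    rcases hd.lt_or_gt with hneg | hpos
    · obtain ⟨E⟩ := nonempty_hom_shift_equiv_of_functorIter_obj_iso_shift S h₁ h₂ N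
        (s := 0) rfl
      have := t.subsingleton_hom_shift X₁ X₂ (a := a) (b := b) (s := 0 + N * d) (by nlinarith)
      exact E.subsingleton
    · obtain ⟨E⟩ := nonempty_hom_shift_equiv_of_functorIter_obj_iso_shift S h₁ h₂ N
        (s := -(N * d)) (s' := 0) (by ring)
      have := t.subsingleton_hom_shift X₁ X₂ (a := a) (b := b) (s := -(N * d)) (by nlinarith)
      exact E.symm.subsingleton
  apply (Iso.homCongr (Iso.refl X₁) ((shiftFunctorZero D ℤ).symm.app X₂)).injective
  exact Subsingleton.elim _ _

end CategoryTheory.Triangulated.TStructure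

namespace DerivedCategory

variable {C : Type u} [Category.{v} C] [Abelian C] [HasDerivedCategory.{w} C]

lemma bounded_of_iso_Q_obj {X : DerivedCategory C} {Y : CochainComplex C ℤ} {a b : ℤ}
    (hY : ∀ n, (n < a ∨ b < n) → IsZero (Y.X n)) (e : X ≅ Q.obj Y) : TStructure.t.bounded X := by
  have : Y.IsStrictlyGE a := (Y.isStrictlyGE_iff a).2 fun i hi => hY i (Or.inl hi)
  have : Y.IsStrictlyLE b := (Y.isStrictlyLE_iff b).2 fun i hi => hY i (Or.inr hi)
  exact ⟨⟨a, TStructure.t.isGE_of_iso e.symm a⟩, ⟨b, TStructure.t.isLE_of_iso e.symm b⟩⟩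

end DerivedCategory

theorem hom_eq_zero_of_fractionally_calabi_yau_general
    (C : Type u) [Category.{v} C] [Abelian C]
    (S : DerivedCategory C ⥤ DerivedCategory C)
    [S.IsEquivalence] [S.CommShift ℤ]
    (X₁ X₂ : DerivedCategory C)
    (hX₁ : ∃ Y : CochainComplex C ℤ,
      (∃ a b : ℤ, ∀ n, (n < a ∨ b < n) → IsZero (Y.X n)) ∧
        Nonempty (X₁ ≅ DerivedCategory.Q.obj Y))
    (hX₂ : ∃ Y : CochainComplex C ℤ,
      (∃ a b : ℤ, ∀ n, (n < a ∨ b < n) → IsZero (Y.X n)) ∧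
        Nonempty (X₂ ≅ DerivedCategory.Q.obj Y))
    (m₁ m₂ : ℕ) (n₁ n₂ : ℤ)
    (h₁ : Nonempty ((functorIter S m₁).obj X₁ ≅ X₁⟦n₁⟧))
    (h₂ : Nonempty ((functorIter S m₂).obj X₂ ≅ X₂⟦n₂⟧))
    (hd : (m₁ : ℤ) * n₂ - (m₂ : ℤ) * n₁ ≠ 0) :
    (∀ f : X₁ ⟶ X₂, f = 0) ∧ (∀ f : X₂ ⟶ X₁, f = 0) := by
  obtain ⟨Y₁, ⟨a₁, b₁, hY₁⟩, ⟨e₁⟩⟩ := hX₁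
  obtain ⟨Y₂, ⟨a₂, b₂, hY₂⟩, ⟨e₂⟩⟩ := hX₂
  obtain ⟨hX₁plus, hX₁minus⟩ := DerivedCategory.bounded_of_iso_Q_obj hY₁ e₁
  obtain ⟨hX₂plus, hX₂minus⟩ := DerivedCategory.bounded_of_iso_Q_obj hY₂ e₂
  exact ⟨DerivedCategory.TStructure.t.hom_eq_zero_of_functorIter_obj_iso_shift S
      hX₁minus hX₂plus h₁ h₂ hd,
    DerivedCategory.TStructure.t.hom_eq_zero_of_functorIter_obj_iso_shift S
      hX₂minus hX₁plus h₂ h₁ (by omega)⟩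

/-- Let `C` be an abelian category and `S` a triangulated autoequivalence of the derived
category `D(C)`.  If `X₁`, `X₂` are objects of `D(C)` isomorphic to bounded complexes and
there are natural numbers `m₁, m₂` and integers `n₁, n₂` with `S^{m₁} X₁ ≅ X₁[n₁]`,
`S^{m₂} X₂ ≅ X₂[n₂]` and `m₁ n₂ - m₂ n₁ ≠ 0`, then all morphisms `X₁ ⟶ X₂` and
`X₂ ⟶ X₁` vanish. -/
theorem hom_eq_zero_of_fractionally_calabi_yau
    (C : Type u) [Category.{v} C] [Abelian C]
    (S : DerivedCategory C ⥤ DerivedCategory C)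
    [S.IsEquivalence] [S.CommShift ℤ] [S.IsTriangulated]
    (X₁ X₂ : DerivedCategory C)
    (hX₁ : ∃ Y : CochainComplex C ℤ,
      (∃ a b : ℤ, ∀ n, (n < a ∨ b < n) → IsZero (Y.X n)) ∧
        Nonempty (X₁ ≅ DerivedCategory.Q.obj Y))
    (hX₂ : ∃ Y : CochainComplex C ℤ,
      (∃ a b : ℤ, ∀ n, (n < a ∨ b < n) → IsZero (Y.X n)) ∧
        Nonempty (X₂ ≅ DerivedCategory.Q.obj Y))
    (m₁ m₂ : ℕ) (n₁ n₂ : ℤ)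
    (h₁ : Nonempty ((functorIter S m₁).obj X₁ ≅ X₁⟦n₁⟧))
    (h₂ : Nonempty ((functorIter S m₂).obj X₂ ≅ X₂⟦n₂⟧))
    (hd : (m₁ : ℤ) * n₂ - (m₂ : ℤ) * n₁ ≠ 0) :
    (∀ f : X₁ ⟶ X₂, f = 0) ∧ (∀ f : X₂ ⟶ X₁, f = 0) :=
  hom_eq_zero_of_fractionally_calabi_yau_general C S X₁ X₂ hX₁ hX₂ m₁ m₂ n₁ n₂ h₁ h₂ hd
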